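/- In an MV-algebra, if a prime implication filter P contains all counits, then P is comparable to every prime implication filter; hence the Conrad filter N, when proper, is the minimum prime implication filter comparable to all prime implication filters. -/

import Mathlib

/-- An MV-algebra `(α, ⊕, ¬, 0)` with the standard axioms. -/
class MV (α : Type*) extends Add α, Neg α, Zero α where
  add_assoc : ∀ a b c : α, a + (b + c) = (a + b) + c
  add_comm : ∀ a b : α, a + b = b + a
  add_zero : ∀ a : α, a + 0 = a
  neg_neg : ∀ a : α, - -a = a
  add_neg_zero : ∀ a : α, a + -(0 : α) = -(0 : α)
  luk : ∀ a b : α, -(-a + b) + b = -(-b + a) + a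

namespace MV

variable {α : Type*} [MV α]

/-- The top element `1 = ¬0`. -/
def one (α : Type*) [MV α] : α := -(0 : α)

/-- Implication `x → y = ¬x ⊕ y`. -/
def imp (a b : α) : α := -a + b

/-- Strong conjunction `x ⊗ y = ¬(¬x ⊕ ¬y)`. -/
def otimes (a b : α) : α := -(-a + -b)

/-- Join `x ∨ y = (x → y) → y`. -/
def sup (a b : α) : α := imp (imp a b) b

/-- Meet `x ∧ y = ¬(¬x ∨ ¬y)`. -/
def inf (a b : α) : α := -(sup (-a) (-b))

/-- Order: `x ≤ y` iff `x → y = 1`. -/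
def le (a b : α) : Prop := imp a b = one α

/-- Strict order. -/
def lt (a b : α) : Prop := le a b ∧ a ≠ b

/-- `n`-fold `⊗`-power. -/
def pow (a : α) : ℕ → α
  | 0 => one α
  | n + 1 => otimes a (pow a n)

/-- An implication filter: a lattice filter closed under `⊗`. -/
def IsImpFilter (F : Set α) : Prop :=
  one α ∈ F ∧ (∀ x ∈ F, ∀ y : α, le x y → y ∈ F) ∧
    (∀ x ∈ F, ∀ y ∈ F, inf x y ∈ F) ∧ (∀ x ∈ F, ∀ y ∈ F, otimes x y ∈ F)

/-- A prime implication filter: proper and `x ∨ y ∈ F → x ∈ F ∨ y ∈ F`. -/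
def IsPrime (F : Set α) : Prop :=
  IsImpFilter F ∧ F ≠ Set.univ ∧ ∀ x y : α, sup x y ∈ F → x ∈ F ∨ y ∈ F

/-- A minimal prime implication filter. -/
def IsMinimalPrime (F : Set α) : Prop :=
  IsPrime F ∧ ∀ G : Set α, IsPrime G → G ⊆ F → G = F

/-- A maximal proper implication filter. -/
def IsMaximal (F : Set α) : Prop :=
  IsImpFilter F ∧ F ≠ Set.univ ∧
    ∀ G : Set α, IsImpFilter G → G ≠ Set.univ → F ⊆ G → G = F

/-- A counit: `u < 1` joining to `1` with some `v < 1`. -/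
def IsCounit (u : α) : Prop :=
  lt u (one α) ∧ ∃ v : α, lt v (one α) ∧ sup u v = one α

/-- The implication filter generated by a set. -/
def gen (S : Set α) : Set α := ⋂₀ {F : Set α | IsImpFilter F ∧ S ⊆ F}

/-- The Conrad filter: the implication filter generated by all counits. -/
def conrad (α : Type*) [MV α] : Set α := gen {u : α | IsCounit u}

/-- The localizing filter `ℓ(P)`, generated by `{x → p : p ∈ P, x ∉ P}`. -/
def locFilter (P : Set α) : Set α :=
  gen {z : α | ∃ x : α, x ∉ P ∧ ∃ p ∈ P, z = imp x p}

/-!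
Prelinearity `(x → y) ∨ (y → x) = 1` makes `x → y` a counit whenever `x` and `y` are
incomparable. Hence a filter `P` containing all counits is comparable with any filter `Q`: for
`q ∈ Q \ P` and `p ∈ P \ Q` the counit `p → q` lies in `P`, and modus ponens puts `q` in `P`.
Applied to the Conrad filter, the same observation shows that `x → y` or `y → x` lies in it for
all `x, y`, which makes it prime when proper. Conversely, if `u ∨ v = 1` with `v < 1`, a filter
maximal among those containing `u` and avoiding `v` is prime, so a prime comparable with all
primes and containing `v` must contain `u`; thus it contains every counit, hence the Conrad filter.
-/

theorem zero_add (a : α) : (0 : α) + a = a := by rw [add_comm]; exact add_zero a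

theorem add_one (a : α) : a + one α = one α := add_neg_zero a

theorem one_add (a : α) : one α + a = one α := by rw [add_comm]; exact add_one a

theorem neg_one : -(one α) = (0 : α) := neg_neg 0

theorem neg_add_self (a : α) : -a + a = one α := by
  have h := luk a (one α)
  rwa [add_one, neg_one, zero_add, eq_comm] at h

theorem le.refl (a : α) : le a a := neg_add_self a

theorem le_one (a : α) : le a (one α) := add_one (-a)

theorem eq_one_of_one_le {a : α} (h : le (one α) a) : a = one α := by
  rwa [le, imp, neg_one, zero_add] at h

theorem le.antisymm {a b : α} (h₁ : le a b) (h₂ : le b a) : a = b := by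
  have hl := luk a b
  rwa [show -a + b = one α from h₁, show -b + a = one α from h₂, neg_one, zero_add, zero_add,
    eq_comm] at hl

theorem le_add_right (a b : α) : le a (a + b) := by
  rw [le, imp, add_assoc, neg_add_self, one_add]

theorem le_add_left (a b : α) : le a (b + a) := by
  rw [add_comm]; exact le_add_right a b

theorem le.exists_add {a b : α} (h : le a b) : ∃ c : α, b = a + c := by
  refine ⟨-(-b + a), ?_⟩
  have hl := luk a b
  rw [show -a + b = one α from h, neg_one, zero_add] at hl
  exact hl.trans (add_comm _ _)

theorem le.trans {a b c : α} (h₁ : le a b) (h₂ : le b c) : le a c := by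
  obtain ⟨d, rfl⟩ := h₁.exists_add
  obtain ⟨e, rfl⟩ := h₂.exists_add
  rw [← add_assoc]
  exact le_add_right a _

theorem add_le_add_right {a b : α} (h : le a b) (c : α) : le (a + c) (b + c) := by
  obtain ⟨d, rfl⟩ := h.exists_add
  rw [← add_assoc, add_comm d, add_assoc]
  exact le_add_right _ _

theorem neg_le_neg {a b : α} (h : le a b) : le (-b) (-a) := by
  rw [le, imp, neg_neg, add_comm]
  exact h

theorem sup_comm (a b : α) : sup a b = sup b a := luk a b

theorem le_sup_left (a b : α) : le a (sup a b) := by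
  change -a + (-(-a + b) + b) = one α
  rw [add_assoc, add_comm (-a), ← add_assoc, neg_add_self]

theorem le_sup_right (a b : α) : le b (sup a b) := le_add_left b _

theorem sup_of_le {a b : α} (h : le a b) : sup a b = b := by
  rw [sup, show imp a b = one α from h, imp, neg_one, zero_add]

theorem sup_le {a b c : α} (ha : le a c) (hb : le b c) : le (sup a b) c := by
  have hmono : le (sup a b) (sup c b) :=
    add_le_add_right (neg_le_neg (add_le_add_right (neg_le_neg ha) b)) b
  rwa [sup_comm c, sup_of_le hb] at hmono

theorem imp_otimes (a b c : α) : imp (otimes a b) c = imp a (imp b c) := by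
  rw [imp, otimes, neg_neg, ← add_assoc]; rfl

theorem otimes_le_iff_le_imp {a b c : α} : le (otimes a b) c ↔ le a (imp b c) := by
  rw [le, le, imp_otimes]

theorem otimes_comm (a b : α) : otimes a b = otimes b a := by
  rw [otimes, otimes, add_comm]

theorem otimes_assoc (a b c : α) : otimes (otimes a b) c = otimes a (otimes b c) := by
  rw [otimes, otimes, otimes, otimes, neg_neg, neg_neg, add_assoc]

theorem otimes_otimes_otimes_comm (a b c d : α) :
    otimes (otimes a b) (otimes c d) = otimes (otimes a c) (otimes b d) := by
  rw [otimes_assoc, ← otimes_assoc b, otimes_comm b, otimes_assoc c, ← otimes_assoc]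

theorem otimes_one (a : α) : otimes a (one α) = a := by
  rw [otimes, neg_one, add_zero, neg_neg]

theorem one_otimes (a : α) : otimes (one α) a = a := by
  rw [otimes_comm]; exact otimes_one a

theorem otimes_le_left (a b : α) : le (otimes a b) a := by
  rw [otimes_le_iff_le_imp, imp, add_comm]
  exact le_add_right a _

theorem otimes_le_right (a b : α) : le (otimes a b) b := by
  rw [otimes_comm]; exact otimes_le_left b a

theorem otimes_le_otimes_right {a b : α} (h : le a b) (c : α) : le (otimes a c) (otimes b c) :=
  neg_le_neg (add_le_add_right (neg_le_neg h) (-c))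

theorem otimes_le_otimes_left {a b : α} (h : le a b) (c : α) : le (otimes c a) (otimes c b) := by
  rw [otimes_comm c, otimes_comm c]; exact otimes_le_otimes_right h c

theorem otimes_le_otimes {a b c d : α} (hab : le a b) (hcd : le c d) :
    le (otimes a c) (otimes b d) :=
  (otimes_le_otimes_right hab c).trans (otimes_le_otimes_left hcd b)

theorem otimes_imp_le (a b : α) : le (otimes a (imp a b)) b :=
  otimes_le_iff_le_imp.mpr (le_sup_left a b)

theorem otimes_le_inf (a b : α) : le (otimes a b) (inf a b) := by
  have h := neg_le_neg (sup_le (neg_le_neg (otimes_le_left a b)) (neg_le_neg (otimes_le_right a b)))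
  rwa [neg_neg] at h

theorem otimes_sup (a b c : α) : otimes c (sup a b) = sup (otimes c a) (otimes c b) := by
  refine le.antisymm ?_ ?_
  · rw [otimes_comm, otimes_le_iff_le_imp]
    refine sup_le (otimes_le_iff_le_imp.mp ?_) (otimes_le_iff_le_imp.mp ?_)
    · rw [otimes_comm]; exact le_sup_left _ _
    · rw [otimes_comm]; exact le_sup_right _ _
  · exact sup_le (otimes_le_otimes_left (le_sup_left a b) c)
      (otimes_le_otimes_left (le_sup_right a b) c)

theorem sup_eq_otimes_neg_add (a b : α) : sup a b = otimes a (-b) + b := by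
  rw [sup, imp, imp, otimes, neg_neg]

theorem otimes_add_neg (x y : α) : otimes (x + y) (-y) = otimes x (-(otimes x y)) := by
  have h := luk (-x) y
  rw [neg_neg, add_comm (-y)] at h
  rw [otimes, otimes, otimes, neg_neg, neg_neg, h, add_comm (-(-x + -y))]

theorem add_add_otimes (x y : α) : (x + y) + otimes x y = x + y := by
  have hxy : otimes x (-(otimes x y)) + y = x + y := by
    rw [← otimes_add_neg, ← sup_eq_otimes_neg_add, sup_comm, sup_of_le (le_add_left y x)]
  have hx : otimes x (-(otimes x y)) + otimes x y = x := by
    rw [← sup_eq_otimes_neg_add, sup_comm, sup_of_le (otimes_le_left x y)]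
  calc (x + y) + otimes x y = (otimes x (-(otimes x y)) + otimes x y) + y := by
        rw [← hxy, ← add_assoc, add_comm y, add_assoc]
    _ = x + y := by rw [hx]

theorem sup_imp_imp (a b : α) : sup (imp a b) (imp b a) = one α := by
  have h : imp (imp a b) (imp b a) = imp b a := by
    change -(-a + b) + (-b + a) = -b + a
    rw [show -(-a + b) = otimes a (-b) by rw [otimes, neg_neg], add_comm, add_comm (-b),
      add_add_otimes]
  rw [sup, h]
  exact neg_add_self _

theorem isCounit_imp {a b : α} (hab : ¬ le a b) (hba : ¬ le b a) : IsCounit (imp a b) :=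
  ⟨⟨le_one _, hab⟩, imp b a, ⟨le_one _, hba⟩, sup_imp_imp a b⟩

theorem otimes_imp_sup_le (x y : α) : le (otimes (imp y x) (sup x y)) x := by
  rw [otimes_sup]
  refine sup_le (otimes_le_right _ _) ?_
  rw [otimes_comm]
  exact otimes_imp_le y x

theorem le_of_sup_eq_one {a b m c : α} (hab : sup a b = one α) (ha : le (otimes m a) c)
    (hb : le (otimes m b) c) : le m c := by
  have hm : otimes m (sup a b) = m := by rw [hab, otimes_one]
  rw [← hm, otimes_sup]
  exact sup_le ha hb

theorem sup_pow_eq_one {a b : α} (h : sup a b = one α) : ∀ n, sup (pow a n) b = one α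
  | 0 => eq_one_of_one_le (le_sup_left (one α) b)
  | n + 1 => by
    refine eq_one_of_one_le ?_
    rw [← sup_pow_eq_one h n]
    refine le_of_sup_eq_one h ?_ ((otimes_le_right _ b).trans (le_sup_right _ _))
    rw [otimes_comm, otimes_sup]
    exact sup_le (le_sup_left _ _) ((otimes_le_right a b).trans (le_sup_right _ _))

theorem pow_add (a : α) (m n : ℕ) : pow a (m + n) = otimes (pow a m) (pow a n) := by
  induction m with
  | zero => rw [Nat.zero_add, pow, one_otimes]
  | succ k ih => rw [Nat.add_right_comm, pow, ih, pow, otimes_assoc]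

namespace IsImpFilter

variable {F : Set α}

theorem one_mem (hF : IsImpFilter F) : one α ∈ F := hF.1

theorem mem_of_le (hF : IsImpFilter F) {x y : α} (hx : x ∈ F) (hxy : le x y) : y ∈ F :=
  hF.2.1 x hx y hxy

theorem otimes_mem (hF : IsImpFilter F) {x y : α} (hx : x ∈ F) (hy : y ∈ F) : otimes x y ∈ F :=
  hF.2.2.2 x hx y hy

theorem mem_of_mem_imp (hF : IsImpFilter F) {x y : α} (hx : x ∈ F) (hxy : imp x y ∈ F) : y ∈ F :=
  hF.mem_of_le (hF.otimes_mem hx hxy) (otimes_imp_le x y)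

theorem mem_of_sup_mem (hF : IsImpFilter F) {x y : α} (hxy : sup x y ∈ F) (hyx : imp y x ∈ F) :
    x ∈ F :=
  hF.mem_of_le (hF.otimes_mem hyx hxy) (otimes_imp_sup_le x y)

/-- Closure under `∧` is automatic, since `x ⊗ y ≤ x ∧ y`. -/
theorem of_otimes_mem (h₁ : one α ∈ F) (hle : ∀ x ∈ F, ∀ y, le x y → y ∈ F)
    (hotimes : ∀ x ∈ F, ∀ y ∈ F, otimes x y ∈ F) : IsImpFilter F :=
  ⟨h₁, hle, fun x hx y hy => hle _ (hotimes x hx y hy) _ (otimes_le_inf x y), hotimes⟩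

theorem isPrime (hF : IsImpFilter F) (hne : F ≠ Set.univ)
    (himp : ∀ x y, imp x y ∈ F ∨ imp y x ∈ F) : IsPrime F := by
  refine ⟨hF, hne, fun x y hxy => ?_⟩
  rcases himp y x with hyx | hxy'
  · exact Or.inl (hF.mem_of_sup_mem hxy hyx)
  · exact Or.inr (hF.mem_of_sup_mem (sup_comm x y ▸ hxy) hxy')

theorem imp_mem_or_imp_mem (hF : IsImpFilter F) (hc : ∀ u : α, IsCounit u → u ∈ F) (x y : α) :
    imp x y ∈ F ∨ imp y x ∈ F := by
  by_cases hxy : le x y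
  · left
    rw [show imp x y = one α from hxy]
    exact hF.one_mem
  by_cases hyx : le y x
  · right
    rw [show imp y x = one α from hyx]
    exact hF.one_mem
  exact Or.inl (hc _ (isCounit_imp hxy hyx))

theorem subset_or_subset_of_counit_mem {P Q : Set α} (hP : IsImpFilter P) (hQ : IsImpFilter Q)
    (hc : ∀ u : α, IsCounit u → u ∈ P) : Q ⊆ P ∨ P ⊆ Q := by
  by_contra! h
  obtain ⟨⟨q, hqQ, hqP⟩, ⟨p, hpP, hpQ⟩⟩ := And.imp Set.not_subset.mp Set.not_subset.mp h
  have hpq : ¬ le p q := fun hpq => hqP (hP.mem_of_le hpP hpq)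
  have hqp : ¬ le q p := fun hqp => hpQ (hQ.mem_of_le hqQ hqp)
  exact hqP (hP.mem_of_mem_imp hpP (hc _ (isCounit_imp hpq hqp)))

end IsImpFilter

theorem isImpFilter_one : IsImpFilter {one α} := by
  refine .of_otimes_mem rfl ?_ ?_
  · rintro _ rfl y hy
    exact eq_one_of_one_le hy
  · rintro _ rfl _ rfl
    exact otimes_one _

theorem isImpFilter_gen (S : Set α) : IsImpFilter (gen S) := by
  refine ⟨fun F hF => hF.1.one_mem, fun x hx y hxy F hF => hF.1.mem_of_le (hx F hF) hxy,
    fun x hx y hy F hF => hF.1.2.2.1 x (hx F hF) y (hy F hF),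
    fun x hx y hy F hF => hF.1.otimes_mem (hx F hF) (hy F hF)⟩

theorem gen_subset {S F : Set α} (hF : IsImpFilter F) (hS : S ⊆ F) : gen S ⊆ F :=
  fun _ hz => hz F ⟨hF, hS⟩

theorem subset_gen (S : Set α) : S ⊆ gen S :=
  fun _ hu _ hF => hF.2 hu

theorem isImpFilter_sUnion {c : Set (Set α)} (hc : ∀ F ∈ c, IsImpFilter F)
    (hchain : IsChain (· ⊆ ·) c) (hne : c.Nonempty) : IsImpFilter (⋃₀ c) := by
  refine .of_otimes_mem ?_ ?_ ?_
  · obtain ⟨F, hF⟩ := hne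
    exact ⟨F, hF, (hc F hF).one_mem⟩
  · rintro x ⟨F, hF, hx⟩ y hxy
    exact ⟨F, hF, (hc F hF).mem_of_le hx hxy⟩
  · rintro x ⟨F, hF, hx⟩ y ⟨G, hG, hy⟩
    rcases hchain.total hF hG with hFG | hGF
    · exact ⟨G, hG, (hc G hG).otimes_mem (hFG hx) hy⟩
    · exact ⟨F, hF, (hc F hF).otimes_mem hx (hGF hy)⟩

/-- The implication filter generated by `F ∪ {x}`, when `F` is an implication filter. -/
def adjoin (F : Set α) (x : α) : Set α :=
  {z | ∃ m ∈ F, ∃ n, le (otimes m (pow x n)) z}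

theorem IsImpFilter.adjoin {F : Set α} (hF : IsImpFilter F) (x : α) :
    IsImpFilter (adjoin F x) := by
  refine .of_otimes_mem ⟨one α, hF.one_mem, 0, le_one _⟩ ?_ ?_
  · rintro z ⟨m, hm, n, hn⟩ w hzw
    exact ⟨m, hm, n, hn.trans hzw⟩
  · rintro z ⟨m, hm, n, hn⟩ w ⟨m', hm', n', hn'⟩
    refine ⟨otimes m m', hF.otimes_mem hm hm', n + n', ?_⟩
    rw [pow_add, otimes_otimes_otimes_comm]
    exact otimes_le_otimes hn hn'

theorem subset_adjoin (F : Set α) (x : α) : F ⊆ adjoin F x :=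
  fun m hm => ⟨m, hm, 0, by rw [pow, otimes_one]; exact le.refl m⟩

theorem mem_adjoin_self {F : Set α} (hF : IsImpFilter F) (x : α) : x ∈ adjoin F x :=
  ⟨one α, hF.one_mem, 1, by rw [one_otimes, pow, pow, otimes_one]; exact le.refl x⟩

section PrimeFilterTheorem

variable {v : α} {M : Set α}

theorem exists_otimes_pow_le_of_maximal (hM : Maximal (fun G => IsImpFilter G ∧ v ∉ G) M)
    {x : α} (hx : x ∉ M) : ∃ m ∈ M, ∃ n, le (otimes m (pow x n)) v := by
  by_contra! h
  have hle : adjoin M x ⊆ M :=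
    hM.2 ⟨hM.1.1.adjoin x, fun ⟨m, hm, n, hn⟩ => h m hm n hn⟩ (subset_adjoin M x)
  exact hx (hle (mem_adjoin_self hM.1.1 x))

theorem isPrime_of_maximal (hM : Maximal (fun G => IsImpFilter G ∧ v ∉ G) M) : IsPrime M := by
  obtain ⟨hMF, hvM⟩ := hM.1
  refine hMF.isPrime (fun h => hvM (h ▸ Set.mem_univ v)) fun x y => ?_
  by_contra! h
  obtain ⟨m, hm, n, hn⟩ := exists_otimes_pow_le_of_maximal hM h.1
  obtain ⟨m', hm', n', hn'⟩ := exists_otimes_pow_le_of_maximal hM h.2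
  have hsup : sup (pow (imp x y) n) (pow (imp y x) n') = one α := by
    refine sup_pow_eq_one ?_ n
    rw [sup_comm]
    exact sup_pow_eq_one (by rw [sup_comm]; exact sup_imp_imp x y) n'
  refine hvM (hMF.mem_of_le (hMF.otimes_mem hm hm') (le_of_sup_eq_one hsup ?_ ?_))
  · exact (otimes_le_otimes_right (otimes_le_left m m') _).trans hn
  · exact (otimes_le_otimes_right (otimes_le_right m m') _).trans hn'

theorem exists_isPrime_superset_not_mem {F : Set α} (hF : IsImpFilter F) (hv : v ∉ F) :
    ∃ M, IsPrime M ∧ F ⊆ M ∧ v ∉ M := by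
  obtain ⟨M, hFM, hM⟩ := zorn_subset_nonempty {G | IsImpFilter G ∧ v ∉ G}
    (fun c hc hchain hne => ⟨⋃₀ c, ⟨isImpFilter_sUnion (fun G hG => (hc hG).1) hchain hne,
      fun ⟨G, hG, hvG⟩ => (hc hG).2 hvG⟩, fun _ => Set.subset_sUnion_of_mem⟩) F ⟨hF, hv⟩
  exact ⟨M, isPrime_of_maximal hM, hFM, hM.1.2⟩

end PrimeFilterTheorem

theorem exists_isPrime_mem_not_mem {u v : α} (h : sup u v = one α) (hv : v ≠ one α) :
    ∃ M, IsPrime M ∧ u ∈ M ∧ v ∉ M := by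
  have hvu : v ∉ adjoin {one α} u := by
    rintro ⟨m, hm, n, hn⟩
    rw [Set.mem_singleton_iff.mp hm] at hn
    exact hv (eq_one_of_one_le (le_of_sup_eq_one (sup_pow_eq_one h n) hn (otimes_le_right _ v)))
  obtain ⟨M, hM, hsub, hvM⟩ := exists_isPrime_superset_not_mem (isImpFilter_one.adjoin u) hvu
  exact ⟨M, hM, hsub (mem_adjoin_self isImpFilter_one u), hvM⟩

theorem IsPrime.counit_mem_of_forall_comparable {P : Set α} (hP : IsPrime P)
    (hcomp : ∀ Q : Set α, IsPrime Q → Q ⊆ P ∨ P ⊆ Q) {u : α} (hu : IsCounit u) : u ∈ P := by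
  obtain ⟨-, v, ⟨-, hv⟩, huv⟩ := hu
  by_contra huP
  have hvP : v ∈ P := (hP.2.2 u v (huv ▸ hP.1.one_mem)).resolve_left huP
  obtain ⟨M, hM, huM, hvM⟩ := exists_isPrime_mem_not_mem huv hv
  rcases hcomp M hM with hMP | hPM
  · exact huP (hMP huM)
  · exact hvM (hPM hvP)

theorem isImpFilter_conrad : IsImpFilter (conrad α) := isImpFilter_gen _

theorem counit_mem_conrad {u : α} (hu : IsCounit u) : u ∈ conrad α := subset_gen _ hu

theorem isPrime_conrad (hne : conrad α ≠ Set.univ) : IsPrime (conrad α) :=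
  isImpFilter_conrad.isPrime hne
    (isImpFilter_conrad.imp_mem_or_imp_mem fun _ => counit_mem_conrad)

end MV

open MV
/-- A prime filter containing all counits is comparable to every prime
filter; hence a proper Conrad filter is the minimum prime comparable to all primes. -/
theorem conrad_minimum_comparable {α : Type*} [MV α] :
    (∀ P : Set α, IsPrime P → (∀ u : α, IsCounit u → u ∈ P) →
      ∀ Q : Set α, IsPrime Q → Q ⊆ P ∨ P ⊆ Q) ∧
    (conrad α ≠ Set.univ →
      IsPrime (conrad α) ∧
      (∀ Q : Set α, IsPrime Q → Q ⊆ conrad α ∨ conrad α ⊆ Q) ∧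
      ∀ P : Set α, IsPrime P → (∀ Q : Set α, IsPrime Q → Q ⊆ P ∨ P ⊆ Q) →
        conrad α ⊆ P) :=
  ⟨fun _ hP hc _ hQ => hP.1.subset_or_subset_of_counit_mem hQ.1 hc,
    fun hne => ⟨isPrime_conrad hne,
      fun _ hQ => isImpFilter_conrad.subset_or_subset_of_counit_mem hQ.1 fun _ => counit_mem_conrad,
      fun _ hP hcomp => gen_subset hP.1 fun _ => hP.counit_mem_of_forall_comparable hcomp⟩⟩
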